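/- Let b ≥ 2 and Ξ_k, ξ_k^{(n)} be as in the canopy-tree random walk model. If 2n ≥ 3k + 5, then ξ_k^{(n)} > (b−1)/(b+1) + (1/4)·b^{−k−1}. -/

import Mathlib

/-!
With `x = b^j`, `a = 1/x` and `c = 1/(b x)`, the summand of `ζ_h` is
`(b-1)²/(b x²) · 1/((1 - a)(1 - c))`, and `1 + a + c ≤ 1/((1 - a)(1 - c)) ≤ (m/(m-1))²` when
`a, c ≤ 1/m`. This squeezes `ζ_h` between geometric series in `b^{-h}`, which sum to
`Ξ_k ≥ (b-1)/(b+1) + (b-1)b/(b²+b+1) · b^{-k-1}` and, with `m = 16 ≤ b^{n+1}`,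
`Ξ_k - ξ_k^{(n)} ≤ (16/15)² (b-1)/(b+1) · b^{2k-2n} ≤ (16/15)² (b-1)/(b+1) · b^{-k-5}`.
As `(b-1)b/(b²+b+1) ≥ 2/7` and `(b-1)/((b+1)b⁴) ≤ 1/48` for `b ≥ 2`, the margin exceeds
`b^{-k-1}/4`.
-/

/-- `ζ_h = ∑_{j ≥ h} (b−1)² / ((b^j − 1)(b^{j+1} − 1))`, written as a sum over `j = h + i`. -/
noncomputable def zeta (b h : ℕ) : ℝ :=
  ∑' i : ℕ, ((b : ℝ) - 1) ^ 2 / (((b : ℝ) ^ (h + i) - 1) * ((b : ℝ) ^ (h + i + 1) - 1))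

/-- `Ξ_k = (b−1)·b^k·∑_{h > k} b^{h−1}·ζ_h`, written as a sum over `h = k + 1 + i`. -/
noncomputable def Xi (b k : ℕ) : ℝ :=
  ((b : ℝ) - 1) * (b : ℝ) ^ k * ∑' i : ℕ, (b : ℝ) ^ (k + i) * zeta b (k + 1 + i)

/-- `ξ_k^{(n)} = Ξ_k − (b−1)·∑_{h > n} b^{h−n+2k−1}·ζ_h`, written with `h = n + 1 + i`. -/
noncomputable def xiFin (b k n : ℕ) : ℝ :=
  Xi b k - ((b : ℝ) - 1) * ∑' i : ℕ, (b : ℝ) ^ (2 * k + i) * zeta b (n + 1 + i)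

lemma hasSum_mul_pow_add {p : ℝ} (hp₀ : 0 ≤ p) (hp₁ : p < 1) (c : ℝ) (h : ℕ) :
    HasSum (fun i : ℕ => c * p ^ (h + i)) (c * p ^ h * (1 - p)⁻¹) := by
  simpa only [pow_add, mul_assoc] using (hasSum_geometric_of_lt_one hp₀ hp₁).mul_left (c * p ^ h)

lemma le_inv_sub_one_mul_sub_one {x r : ℝ} (hx : 1 < x) (hr : 1 ≤ r) :
    (x ^ 2 * r)⁻¹ + (r + 1) * (x ^ 3 * r ^ 2)⁻¹ ≤ ((x - 1) * (x * r - 1))⁻¹ := by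
  have hd : 0 < (x - 1) * (x * r - 1) := mul_pos (by linarith) (by nlinarith)
  have hx0 : 0 < x := by linarith
  have hr0 : 0 < r := by linarith
  rw [show (x ^ 2 * r)⁻¹ + (r + 1) * (x ^ 3 * r ^ 2)⁻¹ = (x * r + r + 1) / (x ^ 3 * r ^ 2) by
    field_simp; ring, ← one_div, div_le_div_iff₀ (by positivity) hd]
  nlinarith [mul_nonneg (sub_nonneg.2 hx.le) (by linarith : (0 : ℝ) ≤ r + 1),
    mul_pos hx0 (mul_pos hr0 hr0)]

lemma inv_sub_one_mul_sub_one_le {x r m : ℝ} (hm : 1 < m) (hmx : m ≤ x) (hr : 1 ≤ r) :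
    ((x - 1) * (x * r - 1))⁻¹ ≤ (m / (m - 1)) ^ 2 * (x ^ 2 * r)⁻¹ := by
  have hx0 : 0 < x := by linarith
  have hq : 0 < (m - 1) / m := div_pos (by linarith) (by linarith)
  have h₁ : x * ((m - 1) / m) ≤ x - 1 := by
    rw [mul_div_assoc', div_le_iff₀ (by linarith)]; nlinarith
  have h₂ : x * r * ((m - 1) / m) ≤ x * r - 1 := by
    rw [mul_div_assoc', div_le_iff₀ (by linarith)]; nlinarith
  have hprod : ((m - 1) / m) ^ 2 * (x ^ 2 * r) ≤ (x - 1) * (x * r - 1) := by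
    calc ((m - 1) / m) ^ 2 * (x ^ 2 * r) = (x * ((m - 1) / m)) * (x * r * ((m - 1) / m)) := by ring
      _ ≤ (x - 1) * (x * r - 1) := mul_le_mul h₁ h₂ (by positivity) (by linarith)
  have hpos : 0 < ((m - 1) / m) ^ 2 * (x ^ 2 * r) :=
    mul_pos (pow_pos hq 2) (mul_pos (pow_pos hx0 2) (by linarith))
  calc ((x - 1) * (x * r - 1))⁻¹ ≤ (((m - 1) / m) ^ 2 * (x ^ 2 * r))⁻¹ := inv_anti₀ hpos hprod
    _ = (m / (m - 1)) ^ 2 * (x ^ 2 * r)⁻¹ := by rw [mul_inv, ← inv_pow, inv_div]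

section Zeta

variable {b : ℕ}

lemma inv_pow_mem_Ico (hb : 2 ≤ b) {m : ℕ} (hm : m ≠ 0) : (b : ℝ)⁻¹ ^ m ∈ Set.Ico 0 1 := by
  have hb' : (1 : ℝ) < b := by exact_mod_cast hb
  exact ⟨by positivity, pow_lt_one₀ (by positivity) (inv_lt_one_of_one_lt₀ hb') hm⟩

lemma zeta_summand_nonneg (hb : 2 ≤ b) {j : ℕ} (hj : 1 ≤ j) :
    0 ≤ ((b : ℝ) - 1) ^ 2 / (((b : ℝ) ^ j - 1) * ((b : ℝ) ^ (j + 1) - 1)) := by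
  have hb' : (1 : ℝ) < b := by exact_mod_cast hb
  have h₁ : 1 < (b : ℝ) ^ j := one_lt_pow₀ hb' (by omega)
  have h₂ : 1 < (b : ℝ) ^ (j + 1) := one_lt_pow₀ hb' (by omega)
  exact div_nonneg (sq_nonneg _) (mul_nonneg (by linarith) (by linarith))

lemma zeta_summand_ge (hb : 2 ≤ b) {j : ℕ} (hj : 1 ≤ j) :
    ((b : ℝ) - 1) ^ 2 / b * ((b : ℝ)⁻¹ ^ 2) ^ j
        + ((b : ℝ) - 1) ^ 2 * (b + 1) / b ^ 2 * ((b : ℝ)⁻¹ ^ 3) ^ j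
      ≤ ((b : ℝ) - 1) ^ 2 / (((b : ℝ) ^ j - 1) * ((b : ℝ) ^ (j + 1) - 1)) := by
  have hb' : (1 : ℝ) < b := by exact_mod_cast hb
  have key := le_inv_sub_one_mul_sub_one (one_lt_pow₀ hb' (by omega : j ≠ 0)) hb'.le
  have := mul_le_mul_of_nonneg_left key (sq_nonneg ((b : ℝ) - 1))
  calc _ = ((b : ℝ) - 1) ^ 2
          * ((((b : ℝ) ^ j) ^ 2 * b)⁻¹ + (b + 1) * (((b : ℝ) ^ j) ^ 3 * b ^ 2)⁻¹) := by
        simp only [inv_pow, ← pow_mul]; field_simp; ring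
    _ ≤ _ := this
    _ = _ := by rw [pow_succ (b : ℝ) j, div_eq_mul_inv]

lemma zeta_summand_le (hb : 2 ≤ b) {j : ℕ} {m : ℝ} (hm : 1 < m) (hmj : m ≤ (b : ℝ) ^ j) :
    ((b : ℝ) - 1) ^ 2 / (((b : ℝ) ^ j - 1) * ((b : ℝ) ^ (j + 1) - 1))
      ≤ (m / (m - 1)) ^ 2 * (((b : ℝ) - 1) ^ 2 / b) * ((b : ℝ)⁻¹ ^ 2) ^ j := by
  have hb' : (1 : ℝ) ≤ b := by exact_mod_cast (by omega : 1 ≤ b)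
  have key := inv_sub_one_mul_sub_one_le hm hmj hb'
  have := mul_le_mul_of_nonneg_left key (sq_nonneg ((b : ℝ) - 1))
  have hm1 : m - 1 ≠ 0 := by linarith
  calc _ = ((b : ℝ) - 1) ^ 2 * (((b : ℝ) ^ j - 1) * ((b : ℝ) ^ j * b - 1))⁻¹ := by
        rw [pow_succ (b : ℝ) j, div_eq_mul_inv]
    _ ≤ _ := this
    _ = _ := by simp only [inv_pow, ← pow_mul]; field_simp; ring

lemma summable_zeta_summand (hb : 2 ≤ b) {h : ℕ} (hh : 1 ≤ h) :
    Summable fun i : ℕ =>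
      ((b : ℝ) - 1) ^ 2 / (((b : ℝ) ^ (h + i) - 1) * ((b : ℝ) ^ (h + i + 1) - 1)) := by
  have hb' : (2 : ℝ) ≤ b := by exact_mod_cast hb
  obtain ⟨hp₀, hp₁⟩ := inv_pow_mem_Ico hb two_ne_zero
  refine Summable.of_nonneg_of_le (fun i => zeta_summand_nonneg hb (by omega))
    (fun i => zeta_summand_le hb one_lt_two (hb'.trans (le_self_pow₀ (by linarith) (by omega))))
    (hasSum_mul_pow_add hp₀ hp₁ _ h).summable

lemma zeta_nonneg (hb : 2 ≤ b) {h : ℕ} (hh : 1 ≤ h) : 0 ≤ zeta b h :=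
  tsum_nonneg fun _ => zeta_summand_nonneg hb (by omega)

lemma zeta_le (hb : 2 ≤ b) {h : ℕ} (hh : 1 ≤ h) {m : ℝ} (hm : 1 < m) (hmh : m ≤ (b : ℝ) ^ h) :
    zeta b h ≤ (m / (m - 1)) ^ 2 * (((b : ℝ) - 1) * b / (b + 1)) * ((b : ℝ)⁻¹ ^ 2) ^ h := by
  have hb' : (2 : ℝ) ≤ b := by exact_mod_cast hb
  obtain ⟨hp₀, hp₁⟩ := inv_pow_mem_Ico hb two_ne_zero
  have hle := hasSum_le
    (fun i => zeta_summand_le hb hm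
      (hmh.trans (pow_le_pow_right₀ (by linarith) (Nat.le_add_right h i))))
    (summable_zeta_summand hb hh).hasSum (hasSum_mul_pow_add hp₀ hp₁ _ h)
  refine hle.trans_eq ?_
  have : (b : ℝ) ^ 2 - 1 ≠ 0 := by nlinarith
  simp only [inv_pow]
  field_simp
  ring

lemma zeta_ge (hb : 2 ≤ b) {h : ℕ} (hh : 1 ≤ h) :
    ((b : ℝ) - 1) * b / (b + 1) * ((b : ℝ)⁻¹ ^ 2) ^ h
        + ((b : ℝ) - 1) * (b + 1) * b / (b ^ 2 + b + 1) * ((b : ℝ)⁻¹ ^ 3) ^ h ≤ zeta b h := by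
  have hb' : (2 : ℝ) ≤ b := by exact_mod_cast hb
  obtain ⟨hp₀, hp₁⟩ := inv_pow_mem_Ico hb two_ne_zero
  obtain ⟨hs₀, hs₁⟩ := inv_pow_mem_Ico hb three_ne_zero
  have hle := hasSum_le (fun i => zeta_summand_ge hb (by omega : 1 ≤ h + i))
    ((hasSum_mul_pow_add hp₀ hp₁ _ h).add (hasSum_mul_pow_add hs₀ hs₁ _ h))
    (summable_zeta_summand hb hh).hasSum
  refine le_trans (le_of_eq ?_) hle
  have : (b : ℝ) ^ 2 - 1 ≠ 0 := by nlinarith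
  have : (b : ℝ) ^ 3 - 1 ≠ 0 := by nlinarith
  have : (b : ℝ) ^ 2 + b + 1 ≠ 0 := by nlinarith
  simp only [inv_pow]
  field_simp
  ring

end Zeta

section Xi

variable {b : ℕ}

lemma summable_Xi_summand (hb : 2 ≤ b) (k : ℕ) :
    Summable fun i : ℕ => (b : ℝ) ^ (k + i) * zeta b (k + 1 + i) := by
  have hb' : (2 : ℝ) ≤ b := by exact_mod_cast hb
  have hq₀ : 0 ≤ (b : ℝ)⁻¹ := by positivity
  have hq₁ : (b : ℝ)⁻¹ < 1 := inv_lt_one_of_one_lt₀ (by linarith)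
  refine Summable.of_nonneg_of_le (fun i => mul_nonneg (by positivity) (zeta_nonneg hb (by omega)))
    (fun i => ?_) (hasSum_mul_pow_add hq₀ hq₁
      ((2 / (2 - 1)) ^ 2 * (((b : ℝ) - 1) * b / (b + 1)) * (b : ℝ)⁻¹ ^ 2) k).summable
  have h2 : (2 : ℝ) ≤ (b : ℝ) ^ (k + 1 + i) :=
    hb'.trans (le_self_pow₀ (by linarith) (by omega))
  refine (mul_le_mul_of_nonneg_left (zeta_le hb (by omega) one_lt_two h2)
    (by positivity)).trans_eq ?_
  simp only [inv_pow]
  field_simp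
  ring

lemma Xi_ge (hb : 2 ≤ b) (k : ℕ) :
    ((b : ℝ) - 1) / (b + 1) + ((b : ℝ) - 1) * b / (b ^ 2 + b + 1) * (b : ℝ)⁻¹ ^ (k + 1)
      ≤ Xi b k := by
  have hb' : (2 : ℝ) ≤ b := by exact_mod_cast hb
  have hq₀ : 0 ≤ (b : ℝ)⁻¹ := by positivity
  have hq₁ : (b : ℝ)⁻¹ < 1 := inv_lt_one_of_one_lt₀ (by linarith)
  obtain ⟨hp₀, hp₁⟩ := inv_pow_mem_Ico hb two_ne_zero
  set A := ((b : ℝ) - 1) * b / (b + 1)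
  set B := ((b : ℝ) - 1) * (b + 1) * b / (b ^ 2 + b + 1)
  have hterm : ∀ i : ℕ, A * (b : ℝ)⁻¹ ^ 2 * (b : ℝ)⁻¹ ^ (k + i)
      + B * (b : ℝ)⁻¹ ^ 3 * ((b : ℝ)⁻¹ ^ 2) ^ (k + i) ≤ (b : ℝ) ^ (k + i) * zeta b (k + 1 + i) := by
    intro i
    refine le_trans (le_of_eq ?_)
      (mul_le_mul_of_nonneg_left (zeta_ge hb (by omega : 1 ≤ k + 1 + i)) (by positivity))
    simp only [A, B, inv_pow]
    field_simp
    ring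
  have hle := hasSum_le hterm
    ((hasSum_mul_pow_add hq₀ hq₁ _ k).add (hasSum_mul_pow_add hp₀ hp₁ _ k))
    (summable_Xi_summand hb k).hasSum
  have hc : 0 ≤ ((b : ℝ) - 1) * (b : ℝ) ^ k := mul_nonneg (by linarith) (by positivity)
  refine le_trans (le_of_eq ?_) (mul_le_mul_of_nonneg_left hle hc)
  have : (b : ℝ) - 1 ≠ 0 := by linarith
  have : (b : ℝ) ^ 2 - 1 ≠ 0 := by nlinarith
  have : (b : ℝ) ^ 2 + b + 1 ≠ 0 := by nlinarith
  simp only [A, B, inv_pow]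
  field_simp
  ring

lemma Xi_sub_xiFin_le (hb : 2 ≤ b) (k n : ℕ) {m : ℝ} (hm : 1 < m) (hmn : m ≤ (b : ℝ) ^ (n + 1)) :
    Xi b k - xiFin b k n
      ≤ (m / (m - 1)) ^ 2 * (((b : ℝ) - 1) / (b + 1)) * (b : ℝ) ^ (2 * k)
        * ((b : ℝ)⁻¹ ^ 2) ^ n := by
  have hb' : (2 : ℝ) ≤ b := by exact_mod_cast hb
  have hq₀ : 0 ≤ (b : ℝ)⁻¹ := by positivity
  have hq₁ : (b : ℝ)⁻¹ < 1 := inv_lt_one_of_one_lt₀ (by linarith)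
  set c := (m / (m - 1)) ^ 2 * (((b : ℝ) - 1) * b / (b + 1)) * (b : ℝ) ^ (2 * k)
    * ((b : ℝ)⁻¹ ^ 2) ^ (n + 1)
  have hterm : ∀ i : ℕ, (b : ℝ) ^ (2 * k + i) * zeta b (n + 1 + i) ≤ c * (b : ℝ)⁻¹ ^ i := by
    intro i
    refine (mul_le_mul_of_nonneg_left (zeta_le hb (by omega) hm
      (hmn.trans (pow_le_pow_right₀ (by linarith) (by omega)))) (by positivity)).trans_eq ?_
    simp only [c, inv_pow]
    field_simp
    ring
  have hgeom := (hasSum_geometric_of_lt_one hq₀ hq₁).mul_left c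
  have hsum := Summable.of_nonneg_of_le
    (fun i => mul_nonneg (by positivity) (zeta_nonneg hb (by omega))) hterm hgeom.summable
  have hle := hasSum_le hterm hsum.hasSum hgeom
  rw [xiFin, sub_sub_cancel]
  refine (mul_le_mul_of_nonneg_left hle (by linarith : (0 : ℝ) ≤ b - 1)).trans_eq ?_
  have : (b : ℝ) - 1 ≠ 0 := by linarith
  have : m - 1 ≠ 0 := by linarith
  simp only [c, inv_pow]
  field_simp
  ring

end Xi

lemma pow_mul_inv_pow_le {r : ℝ} (hr : 1 ≤ r) {a c d : ℕ} (h : a + c ≤ d) :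
    r ^ a * r⁻¹ ^ d ≤ r⁻¹ ^ c := by
  obtain ⟨e, rfl⟩ := Nat.exists_eq_add_of_le h
  have hr₀ : r ≠ 0 := by positivity
  rw [pow_add, pow_add, ← mul_assoc, ← mul_assoc, ← mul_pow, mul_inv_cancel₀ hr₀, one_pow, one_mul]
  exact mul_le_of_le_one_right (by positivity)
    (pow_le_one₀ (by positivity) (inv_le_one_of_one_le₀ hr))

lemma quarter_add_lt_of_two_le (r : ℝ) (hr : 2 ≤ r) :
    1 / 4 + (16 / 15) ^ 2 * ((r - 1) / (r + 1)) * r⁻¹ ^ 4 < (r - 1) * r / (r ^ 2 + r + 1) := by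
  have hmain : 2 / 7 ≤ (r - 1) * r / (r ^ 2 + r + 1) := by
    rw [div_le_div_iff₀ (by norm_num) (by nlinarith)]; nlinarith
  have htail : (r - 1) / (r + 1) * r⁻¹ ^ 4 ≤ 1 / 48 := by
    rw [inv_pow, ← div_eq_mul_inv, div_div, div_le_div_iff₀ (by positivity) (by norm_num)]
    nlinarith [pow_le_pow_left₀ (by norm_num) hr 4, pow_le_pow_left₀ (by norm_num) hr 3]
  nlinarith

/-- If `2n ≥ 3k + 5`, then `ξ_k^{(n)} > (b−1)/(b+1) + (1/4)·b^{−k−1}`. -/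
theorem stmt14 (b : ℕ) (hb : 2 ≤ b) (k n : ℕ) (hkn : 3 * k + 5 ≤ 2 * n) :
    ((b : ℝ) - 1) / ((b : ℝ) + 1) + (1 / 4) * (b : ℝ) ^ (-((k : ℤ) + 1)) < xiFin b k n := by
  have hb' : (2 : ℝ) ≤ b := by exact_mod_cast hb
  have h16 : (16 : ℝ) ≤ (b : ℝ) ^ (n + 1) :=
    calc (16 : ℝ) = 2 ^ 4 := by norm_num
      _ ≤ 2 ^ (n + 1) := pow_le_pow_right₀ one_le_two (by omega)
      _ ≤ (b : ℝ) ^ (n + 1) := pow_le_pow_left₀ zero_le_two hb' _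
  have hpow : (b : ℝ) ^ (2 * k) * ((b : ℝ)⁻¹ ^ 2) ^ n ≤ (b : ℝ)⁻¹ ^ (k + 1) * (b : ℝ)⁻¹ ^ 4 := by
    rw [← pow_mul, ← pow_add]
    exact pow_mul_inv_pow_le (by linarith) (by omega)
  have hXi := Xi_ge hb k
  have htail := Xi_sub_xiFin_le hb k n (by norm_num : (1 : ℝ) < 16) h16
  rw [show (16 : ℝ) / (16 - 1) = 16 / 15 by norm_num] at htail
  have hC : 0 ≤ (16 / 15 : ℝ) ^ 2 * (((b : ℝ) - 1) / (b + 1)) :=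
    mul_nonneg (by norm_num) (div_nonneg (by linarith) (by linarith))
  have hpow' := mul_le_mul_of_nonneg_left hpow hC
  have hcoef := mul_lt_mul_of_pos_right (quarter_add_lt_of_two_le b hb')
    (by positivity : 0 < (b : ℝ)⁻¹ ^ (k + 1))
  rw [zpow_neg, ← inv_zpow, show (k : ℤ) + 1 = ((k + 1 : ℕ) : ℤ) by push_cast; ring, zpow_natCast]
  linarith
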